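/- Let Z = [z_1, …, z_N] ∈ ℝ^{m×N} with ‖z_i‖ ≤ R for all i, let β̃_est = (−β̂, 1) and β̃_true = (−β*, 1) satisfy ‖Z'β̃_est‖_1 ≤ γ_N, ‖Z'β̃_true‖_1 ≤ γ_N, and ‖β̃_est‖_* ≤ ‖β̃_true‖_*. Suppose the restricted eigenvalue condition holds: v'ZZ'v ≥ α ‖v‖_2² for all v in the cone A(β*) = cone{v : ‖β̃_true + v‖_* ≤ ‖β̃_true‖_*}, with α > 0. Then ‖β̂ − β*‖_2 ≤ (2 R γ_N / α) Ψ(β*), where Ψ(β*) = sup{‖v‖_* : v ∈ A(β*), ‖v‖_2 = 1}. -/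

import Mathlib

/-!
The error `u = β̃_est − β̃_true` satisfies `‖β̃_true + u‖_* ≤ ‖β̃_true‖_*`, so `u` and its
normalisation lie in the cone `A(β*)`. The restricted eigenvalue condition gives
`α ‖u‖₂² ≤ ‖Z'u‖₂²`. Each entry of `Z'u` is a pairing `⟨u, z_i⟩ ≤ ‖u‖_* ‖z_i‖ ≤ R ‖u‖_*`, and
feasibility of both vectors gives `‖Z'u‖₁ ≤ 2γ_N`, so the ℓ¹–ℓ^∞ Hölder inequality yields
`‖Z'u‖₂² ≤ 2γ_N R ‖u‖_*`. Finally `‖u‖_* ≤ Ψ(β*) ‖u‖₂` by homogeneity, and dividing by `α ‖u‖₂`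
gives the bound. The dual norm is a genuine (finite) supremum because the unit ball of a norm
on a finite-dimensional space is compact.
-/

open Matrix Set

namespace Seminorm

variable {E : Type*} [NormedAddCommGroup E] [NormedSpace ℝ E] [FiniteDimensional ℝ E]

theorem exists_pos_mul_norm_le (p : Seminorm ℝ E) (hp : ∀ z, p z = 0 → z = 0) :
    ∃ ε > 0, ∀ z, ε * ‖z‖ ≤ p z := by
  rcases subsingleton_or_nontrivial E with hE | hE
  · exact ⟨1, one_pos, fun z => by simp [Subsingleton.elim z 0]⟩
  obtain ⟨z₀, hz₀, hmin⟩ := (isCompact_sphere (0 : E) 1).exists_isMinOn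
    (NormedSpace.sphere_nonempty.2 zero_le_one) p.convexOn.locallyLipschitz.continuous.continuousOn
  rw [mem_sphere_zero_iff_norm] at hz₀
  refine ⟨p z₀, (apply_nonneg p z₀).lt_of_ne fun h => ?_, fun z => ?_⟩
  · simp [hp z₀ h.symm] at hz₀
  rcases eq_or_ne z 0 with rfl | hz
  · simp
  have hz' : 0 < ‖z‖ := norm_pos_iff.2 hz
  have : p z₀ ≤ p (‖z‖⁻¹ • z) := hmin (by simp [norm_smul, hz'.ne'])
  rwa [map_smul_eq_mul, norm_inv, norm_norm, ← div_eq_inv_mul, le_div_iff₀ hz'] at this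

theorem isCompact_setOf_le_one (p : Seminorm ℝ E) (hp : ∀ z, p z = 0 → z = 0) :
    IsCompact {z | p z ≤ 1} := by
  obtain ⟨ε, hε, hle⟩ := p.exists_pos_mul_norm_le hp
  refine Metric.isCompact_of_isClosed_isBounded
    (isClosed_le p.convexOn.locallyLipschitz.continuous continuous_const) ?_
  refine (Metric.isBounded_closedBall (x := 0) (r := ε⁻¹)).subset fun z hz => ?_
  rw [mem_closedBall_zero_iff, ← one_div, le_div_iff₀ hε, mul_comm]
  exact (hle z).trans hz

end Seminorm

theorem Finset.sum_sq_le_sum_abs_mul {κ : Type*} (s : Finset κ) {a : κ → ℝ} {B : ℝ}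
    (ha : ∀ i ∈ s, |a i| ≤ B) : ∑ i ∈ s, a i ^ 2 ≤ (∑ i ∈ s, |a i|) * B := by
  rw [Finset.sum_mul]
  gcongr with i hi
  rw [← sq_abs, sq]
  exact mul_le_mul_of_nonneg_left (ha i hi) (abs_nonneg _)

section DualNorm

variable {ι κ : Type*} [Fintype ι] [Fintype κ] {p : Seminorm ℝ (ι → ℝ)}

/-- Finite as soon as `p` is definite (`bddAbove_dualNorm_set`); otherwise `sSup` may be junk. -/
noncomputable def dualNorm (p : Seminorm ℝ (ι → ℝ)) (θ : ι → ℝ) : ℝ :=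
  sSup {x | ∃ z, p z ≤ 1 ∧ x = θ ⬝ᵥ z}

theorem exists_dotProduct_le_of_isBounded (hp : ∀ z, p z = 0 → z = 0) {B : Set (ι → ℝ)}
    (hB : Bornology.IsBounded B) : ∃ M, ∀ θ ∈ B, ∀ z, p z ≤ 1 → θ ⬝ᵥ z ≤ M := by
  obtain ⟨r, hr⟩ := hB.subset_closedBall 0
  obtain ⟨M, hM⟩ := ((isCompact_closedBall (0 : ι → ℝ) r).prod
    (p.isCompact_setOf_le_one hp)).bddAbove_image (f := fun q => q.1 ⬝ᵥ q.2)
    (continuous_fst.dotProduct continuous_snd).continuousOn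
  exact ⟨M, fun θ hθ z hz => hM ⟨(θ, z), ⟨hr hθ, hz⟩, rfl⟩⟩

theorem bddAbove_dualNorm_set (hp : ∀ z, p z = 0 → z = 0) (θ : ι → ℝ) :
    BddAbove {x | ∃ z, p z ≤ 1 ∧ x = θ ⬝ᵥ z} := by
  obtain ⟨M, hM⟩ := exists_dotProduct_le_of_isBounded hp (Bornology.isBounded_singleton (x := θ))
  exact ⟨M, by rintro _ ⟨z, hz, rfl⟩; exact hM θ rfl z hz⟩

theorem dotProduct_le_dualNorm (hp : ∀ z, p z = 0 → z = 0) (θ : ι → ℝ) {z : ι → ℝ}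
    (hz : p z ≤ 1) : θ ⬝ᵥ z ≤ dualNorm p θ :=
  le_csSup (bddAbove_dualNorm_set hp θ) ⟨z, hz, rfl⟩

theorem dualNorm_nonneg (hp : ∀ z, p z = 0 → z = 0) (θ : ι → ℝ) : 0 ≤ dualNorm p θ := by
  simpa using dotProduct_le_dualNorm hp θ (z := 0) (by simp)

theorem dotProduct_le_dualNorm_mul (hp : ∀ z, p z = 0 → z = 0) (θ z : ι → ℝ) :
    θ ⬝ᵥ z ≤ dualNorm p θ * p z := by
  rcases (apply_nonneg p z).eq_or_lt with h | h
  · simp [hp z h.symm]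
  have := dotProduct_le_dualNorm hp θ (z := (p z)⁻¹ • z) <| by
    rw [map_smul_eq_mul, Real.norm_eq_abs, abs_inv, abs_of_pos h, inv_mul_cancel₀ h.ne']
  rwa [dotProduct_smul, smul_eq_mul, inv_mul_le_iff₀ h, mul_comm] at this

theorem abs_dotProduct_le_dualNorm_mul (hp : ∀ z, p z = 0 → z = 0) (θ z : ι → ℝ) :
    |θ ⬝ᵥ z| ≤ dualNorm p θ * p z := by
  refine abs_le.2 ⟨?_, dotProduct_le_dualNorm_mul hp θ z⟩
  have := dotProduct_le_dualNorm_mul hp θ (-z)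
  rw [dotProduct_neg, map_neg_eq_map] at this
  linarith

theorem dualNorm_smul {c : ℝ} (hc : 0 ≤ c) (θ : ι → ℝ) :
    dualNorm p (c • θ) = c * dualNorm p θ := by
  rw [dualNorm, dualNorm, ← smul_eq_mul, ← Real.sSup_smul_of_nonneg hc]
  congr 1
  ext x
  simp [Set.mem_smul_set, smul_dotProduct, eq_comm]

theorem bddAbove_dualNorm_image (hp : ∀ z, p z = 0 → z = 0) {B : Set (ι → ℝ)}
    (hB : Bornology.IsBounded B) : BddAbove (dualNorm p '' B) := by
  obtain ⟨M, hM⟩ := exists_dotProduct_le_of_isBounded hp hB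
  refine ⟨M, ?_⟩
  rintro _ ⟨θ, hθ, rfl⟩
  exact csSup_le ⟨θ ⬝ᵥ 0, 0, by simp, rfl⟩ (by rintro _ ⟨z, hz, rfl⟩; exact hM θ hθ z hz)

/-- The constant `Ψ` of the estimate for `A = A(β*)`. The sum of squares is the Euclidean norm:
`ι → ℝ` itself carries the sup norm. -/
noncomputable def compatibilityConstant (p : Seminorm ℝ (ι → ℝ)) (A : Set (ι → ℝ)) : ℝ :=
  sSup {x | ∃ v ∈ A, ∑ j, v j ^ 2 = 1 ∧ x = dualNorm p v}

theorem isBounded_setOf_sum_sq_eq_one : Bornology.IsBounded {v : ι → ℝ | ∑ j, v j ^ 2 = 1} := by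
  refine (Metric.isBounded_closedBall (x := 0) (r := 1)).subset fun v hv => ?_
  rw [mem_closedBall_zero_iff, pi_norm_le_iff_of_nonneg zero_le_one]
  intro j
  rw [Real.norm_eq_abs, ← sq_le_one_iff_abs_le_one]
  exact hv ▸ Finset.single_le_sum (fun j _ => sq_nonneg (v j)) (Finset.mem_univ j)

theorem dualNorm_le_compatibilityConstant (hp : ∀ z, p z = 0 → z = 0) {A : Set (ι → ℝ)}
    {v : ι → ℝ} (hv : v ∈ A) (h1 : ∑ j, v j ^ 2 = 1) :
    dualNorm p v ≤ compatibilityConstant p A := by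
  refine le_csSup ((bddAbove_dualNorm_image hp isBounded_setOf_sum_sq_eq_one).mono ?_)
    ⟨v, hv, h1, rfl⟩
  rintro _ ⟨w, -, hw, rfl⟩
  exact ⟨w, hw, rfl⟩

theorem compatibilityConstant_nonneg (hp : ∀ z, p z = 0 → z = 0) (A : Set (ι → ℝ)) :
    0 ≤ compatibilityConstant p A :=
  Real.sSup_nonneg (by rintro _ ⟨v, -, -, rfl⟩; exact dualNorm_nonneg hp v)

theorem sum_sq_mulVec_transpose_le (hp : ∀ z, p z = 0 → z = 0) (Z : Matrix ι κ ℝ) {R G : ℝ}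
    (hR : 0 ≤ R) (hcol : ∀ i, p (Zᵀ i) ≤ R) {u : ι → ℝ} (hsum : ∑ i, |(Zᵀ *ᵥ u) i| ≤ G) :
    ∑ i, (Zᵀ *ᵥ u) i ^ 2 ≤ G * R * dualNorm p u := by
  have hcol_u : ∀ i, |(Zᵀ *ᵥ u) i| ≤ dualNorm p u * R := fun i => by
    rw [mulVec, dotProduct_comm]
    exact (abs_dotProduct_le_dualNorm_mul hp u _).trans
      (mul_le_mul_of_nonneg_left (hcol i) (dualNorm_nonneg hp u))
  calc ∑ i, (Zᵀ *ᵥ u) i ^ 2 ≤ (∑ i, |(Zᵀ *ᵥ u) i|) * (dualNorm p u * R) :=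
        Finset.sum_sq_le_sum_abs_mul _ fun i _ => hcol_u i
    _ ≤ G * (dualNorm p u * R) :=
        mul_le_mul_of_nonneg_right hsum (mul_nonneg (dualNorm_nonneg hp u) hR)
    _ = G * R * dualNorm p u := by ring

theorem sqrt_sum_sq_le_of_restrictedEigenvalue (hp : ∀ z, p z = 0 → z = 0) (Z : Matrix ι κ ℝ)
    {A : Set (ι → ℝ)} {u : ι → ℝ} {R G α : ℝ} (hcol : ∀ i, p (Zᵀ i) ≤ R) (hα : 0 < α)
    (hRE : ∀ v ∈ A, α * ∑ j, v j ^ 2 ≤ ∑ i, (Zᵀ *ᵥ v) i ^ 2)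
    (hA : ∀ c : ℝ, 0 ≤ c → c • u ∈ A) (hsum : ∑ i, |(Zᵀ *ᵥ u) i| ≤ G) :
    √(∑ j, u j ^ 2) ≤ R * G / α * compatibilityConstant p A := by
  have hR_of_mem : ∀ v ∈ A, ∑ j, v j ^ 2 = 1 → 0 ≤ R := by
    intro v hv h1
    have := hRE v hv
    obtain ⟨i⟩ : Nonempty κ := by
      by_contra h
      rw [not_nonempty_iff] at h
      simp [h1] at this
      linarith
    exact (apply_nonneg p _).trans (hcol i)
  have hG : 0 ≤ G := (Finset.sum_nonneg fun i _ => abs_nonneg _).trans hsum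
  set t := √(∑ j, u j ^ 2)
  rcases (show 0 ≤ t from Real.sqrt_nonneg _).eq_or_lt with ht | ht
  · rw [← ht]
    -- If `R < 0` then `κ` is empty, so `A` has no unit vector and the constant is `sSup ∅ = 0`.
    rcases le_or_gt 0 R with hR | hR
    · exact mul_nonneg (div_nonneg (mul_nonneg hR hG) hα.le) (compatibilityConstant_nonneg hp A)
    · have hempty : {x | ∃ v ∈ A, ∑ j, v j ^ 2 = 1 ∧ x = dualNorm p v} = ∅ :=
        Set.eq_empty_of_forall_notMem fun _ ⟨v, hv, h1, _⟩ => hR.not_ge (hR_of_mem v hv h1)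
      rw [compatibilityConstant, hempty, Real.sSup_empty, mul_zero]
  have hS : ∑ j, u j ^ 2 = t ^ 2 := (Real.sq_sqrt (Finset.sum_nonneg fun j _ => sq_nonneg _)).symm
  set v := t⁻¹ • u
  have hv1 : ∑ j, v j ^ 2 = 1 := by
    simp only [v, Pi.smul_apply, smul_eq_mul, mul_pow, ← Finset.mul_sum, hS]
    rw [← mul_pow, inv_mul_cancel₀ ht.ne', one_pow]
  have hvA : v ∈ A := hA t⁻¹ (inv_nonneg.2 ht.le)
  have hR := hR_of_mem v hvA hv1
  have hdual : dualNorm p u ≤ t * compatibilityConstant p A := by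
    rw [← smul_inv_smul₀ ht.ne' u, dualNorm_smul ht.le]
    exact mul_le_mul_of_nonneg_left (dualNorm_le_compatibilityConstant hp hvA hv1) ht.le
  have key : α * t ^ 2 ≤ G * R * (t * compatibilityConstant p A) := calc
    α * t ^ 2 = α * ∑ j, u j ^ 2 := by rw [hS]
    _ ≤ ∑ i, (Zᵀ *ᵥ u) i ^ 2 := hRE u (by simpa using hA 1 zero_le_one)
    _ ≤ G * R * dualNorm p u := sum_sq_mulVec_transpose_le hp Z hR hcol hsum
    _ ≤ G * R * (t * compatibilityConstant p A) :=
      mul_le_mul_of_nonneg_left hdual (mul_nonneg hG hR)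
  rw [div_mul_eq_mul_div, le_div_iff₀ hα]
  nlinarith

theorem sum_sq_snoc_sub_snoc {n : ℕ} (a b : Fin n → ℝ) (c : ℝ) :
    ∑ j, (Fin.snoc a c - Fin.snoc b c : Fin (n + 1) → ℝ) j ^ 2 = ∑ j, (a j - b j) ^ 2 := by
  simp [Fin.sum_univ_castSucc]

theorem stmt8_general (m N : ℕ) (nn : (Fin (m + 1) → ℝ) → ℝ)
    (hnnh : ∀ (c : ℝ) z, nn (c • z) = |c| * nn z)
    (hnnt : ∀ z w, nn (z + w) ≤ nn z + nn w) (hnnd : ∀ z, nn z = 0 → z = 0)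
    (dn : (Fin (m + 1) → ℝ) → ℝ)
    (hdn : ∀ θ, dn θ = sSup {x | ∃ z, nn z ≤ 1 ∧ x = θ ⬝ᵥ z})
    (Z : Matrix (Fin (m + 1)) (Fin N) ℝ) (R γN α : ℝ)
    (hRcol : ∀ i, nn (fun j => Z j i) ≤ R)
    (βhat βstar : Fin m → ℝ) (bte btt : Fin (m + 1) → ℝ)
    (hbte : bte = Fin.snoc (-βhat) 1) (hbtt : btt = Fin.snoc (-βstar) 1)
    (hfeas1 : ∑ i, |∑ j, Z j i * bte j| ≤ γN)
    (hfeas2 : ∑ i, |∑ j, Z j i * btt j| ≤ γN)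
    (hopt : dn bte ≤ dn btt)
    (hα : 0 < α)
    (Acone : Set (Fin (m + 1) → ℝ))
    (hAcone : Acone = {w | ∃ c : ℝ, 0 ≤ c ∧ ∃ v, dn (btt + v) ≤ dn btt ∧ w = c • v})
    (hRE : ∀ v ∈ Acone, α * (∑ j, v j ^ 2) ≤ ∑ i, (∑ j, Z j i * v j) ^ 2) :
    Real.sqrt (∑ j, (βhat j - βstar j) ^ 2) ≤
      (2 * R * γN / α) * sSup {x | ∃ v ∈ Acone, (∑ j, v j ^ 2) = 1 ∧ x = dn v} := by
  let p : Seminorm ℝ (Fin (m + 1) → ℝ) := Seminorm.of nn hnnt hnnh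
  obtain rfl : dn = dualNorm p := funext hdn
  have hsum : ∑ i, |(Zᵀ *ᵥ (bte - btt)) i| ≤ 2 * γN := by
    simp only [mulVec_sub, Pi.sub_apply]
    calc ∑ i, |(Zᵀ *ᵥ bte) i - (Zᵀ *ᵥ btt) i|
        ≤ ∑ i, (|(Zᵀ *ᵥ bte) i| + |(Zᵀ *ᵥ btt) i|) := Finset.sum_le_sum fun i _ => abs_sub _ _
      _ ≤ 2 * γN := by
        rw [Finset.sum_add_distrib]
        exact (add_le_add hfeas1 hfeas2).trans_eq (two_mul γN).symm
  have hcone : ∀ c : ℝ, 0 ≤ c → c • (bte - btt) ∈ Acone := fun c hc =>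
    hAcone ▸ ⟨c, hc, bte - btt, by simpa using hopt, rfl⟩
  have hnorm : ∑ j, (βhat j - βstar j) ^ 2 = ∑ j, (bte - btt) j ^ 2 := by
    rw [hbte, hbtt, sum_sq_snoc_sub_snoc]
    exact Finset.sum_congr rfl fun j _ => by simp only [Pi.neg_apply]; ring
  calc √(∑ j, (βhat j - βstar j) ^ 2) = √(∑ j, (bte - btt) j ^ 2) := by rw [hnorm]
    _ ≤ R * (2 * γN) / α * compatibilityConstant p Acone :=
      sqrt_sum_sq_le_of_restrictedEigenvalue hnnd Z hRcol hα hRE hcone hsum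
    _ = _ := by congr 2; ring

/-- Estimation-error bound: under feasibility of β̂ and β*, optimality ‖β̃_est‖_* ≤ ‖β̃_true‖_*,
and the restricted eigenvalue condition on the cone A(β*), we have
‖β̂ − β*‖₂ ≤ (2Rγ_N/α) Ψ(β*). -/
theorem stmt8 (m N : ℕ) (nn : (Fin (m + 1) → ℝ) → ℝ)
    (hnn0 : ∀ z, 0 ≤ nn z) (hnnh : ∀ (c : ℝ) z, nn (c • z) = |c| * nn z)
    (hnnt : ∀ z w, nn (z + w) ≤ nn z + nn w) (hnnd : ∀ z, nn z = 0 → z = 0)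
    (dn : (Fin (m + 1) → ℝ) → ℝ)
    (hdn : ∀ θ, dn θ = sSup {x | ∃ z, nn z ≤ 1 ∧ x = θ ⬝ᵥ z})
    (Z : Matrix (Fin (m + 1)) (Fin N) ℝ) (R γN α : ℝ)
    (hRcol : ∀ i, nn (fun j => Z j i) ≤ R)
    (βhat βstar : Fin m → ℝ) (bte btt : Fin (m + 1) → ℝ)
    (hbte : bte = Fin.snoc (-βhat) 1) (hbtt : btt = Fin.snoc (-βstar) 1)
    (hfeas1 : ∑ i, |∑ j, Z j i * bte j| ≤ γN)
    (hfeas2 : ∑ i, |∑ j, Z j i * btt j| ≤ γN)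
    (hopt : dn bte ≤ dn btt)
    (hα : 0 < α)
    (Acone : Set (Fin (m + 1) → ℝ))
    (hAcone : Acone = {w | ∃ c : ℝ, 0 ≤ c ∧ ∃ v, dn (btt + v) ≤ dn btt ∧ w = c • v})
    (hRE : ∀ v ∈ Acone, α * (∑ j, v j ^ 2) ≤ ∑ i, (∑ j, Z j i * v j) ^ 2) :
    Real.sqrt (∑ j, (βhat j - βstar j) ^ 2) ≤
      (2 * R * γN / α) * sSup {x | ∃ v ∈ Acone, (∑ j, v j ^ 2) = 1 ∧ x = dn v} :=
  stmt8_general m N nn hnnh hnnt hnnd dn hdn Z R γN α hRcol βhat βstar bte btt hbte hbtt hfeas1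
    hfeas2 hopt hα Acone hAcone hRE
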